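/- arXiv:1905.12808 — 2 statements merged into one kernel-verified Lean document; each statement's English description precedes it below -/
import Mathlib

section
/- Let 0 < σ < 1, ε ≥ 0, and 0 < ψ < 1. Define ρ = 1 - (1-ψ)(1-σ) and φ = ε/((1-σ)ψ). Then 0 < ρ < 1, and for all nonnegative reals a, b, if b ≤ σ·a + ε then b ≤ max(ρ·a, φ). -/
/-!
Write `ε = (1 - σ) ψ φ` and `ρ = 1 - (1 - ψ)(1 - σ)`. Then
`ρ a - (σ a + ε) = (1 - σ) ψ (a - φ)` and `φ - (σ φ + ε) = (1 - σ)(1 - ψ) φ`,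
so the affine bound `σ a + ε` lies below `ρ a` once `a ≥ φ`, and below `φ` while `a ≤ φ`.
-/

section

variable {K : Type*} [Field K] [LinearOrder K] [IsStrictOrderedRing K] {σ ψ φ a : K}

lemma mul_add_le_one_sub_mul_of_le (hσ1 : σ ≤ 1) (hψ0 : 0 ≤ ψ) (hφa : φ ≤ a) :
    σ * a + (1 - σ) * ψ * φ ≤ (1 - (1 - ψ) * (1 - σ)) * a := by
  have : 0 ≤ (1 - σ) * ψ * (a - φ) := by
    have := sub_nonneg.2 hσ1
    have := sub_nonneg.2 hφa
    positivity
  linarith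

lemma mul_add_le_of_le (hσ0 : 0 ≤ σ) (hσ1 : σ ≤ 1) (hψ1 : ψ ≤ 1) (ha : 0 ≤ a) (haφ : a ≤ φ) :
    σ * a + (1 - σ) * ψ * φ ≤ φ := by
  have : 0 ≤ (1 - σ) * (1 - ψ) * φ := by
    have := sub_nonneg.2 hσ1
    have := sub_nonneg.2 hψ1
    have := ha.trans haφ
    positivity
  nlinarith [mul_le_mul_of_nonneg_left haφ hσ0]

lemma mul_add_le_max (hσ0 : 0 ≤ σ) (hσ1 : σ ≤ 1) (hψ0 : 0 ≤ ψ) (hψ1 : ψ ≤ 1) (ha : 0 ≤ a) :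
    σ * a + (1 - σ) * ψ * φ ≤ max ((1 - (1 - ψ) * (1 - σ)) * a) φ := by
  rcases le_total φ a with hφa | haφ
  · exact le_max_of_le_left (mul_add_le_one_sub_mul_of_le hσ1 hψ0 hφa)
  · exact le_max_of_le_right (mul_add_le_of_le hσ0 hσ1 hψ1 ha haφ)

end

theorem stmt_0_general (σ ε ψ : ℝ) (hσ0 : 0 < σ) (hσ1 : σ < 1)
    (hψ0 : 0 < ψ) (hψ1 : ψ < 1) :
    (0 < 1 - (1 - ψ) * (1 - σ) ∧ 1 - (1 - ψ) * (1 - σ) < 1) ∧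
    ∀ a b : ℝ, 0 ≤ a → 0 ≤ b → b ≤ σ * a + ε →
      b ≤ max ((1 - (1 - ψ) * (1 - σ)) * a) (ε / ((1 - σ) * ψ)) := by
  have h1σ : 0 < 1 - σ := sub_pos.2 hσ1
  have h1ψ : 0 < 1 - ψ := sub_pos.2 hψ1
  have hprod_lt_one : (1 - ψ) * (1 - σ) < 1 := mul_lt_one_of_nonneg_of_lt_one_left
    h1ψ.le (by linarith) (by linarith)
  refine ⟨⟨sub_pos.2 hprod_lt_one, sub_lt_self _ (mul_pos h1ψ h1σ)⟩, ?_⟩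
  intro a b ha _ hab
  have hε : ε = (1 - σ) * ψ * (ε / ((1 - σ) * ψ)) :=
    (mul_div_cancel₀ ε (mul_pos h1σ hψ0).ne').symm
  rw [hε] at hab
  exact hab.trans (mul_add_le_max hσ0.le hσ1.le hψ0.le hψ1.le ha)

theorem stmt_0 (σ ε ψ : ℝ) (hσ0 : 0 < σ) (hσ1 : σ < 1) (hε : 0 ≤ ε)
    (hψ0 : 0 < ψ) (hψ1 : ψ < 1) :
    (0 < 1 - (1 - ψ) * (1 - σ) ∧ 1 - (1 - ψ) * (1 - σ) < 1) ∧
    ∀ a b : ℝ, 0 ≤ a → 0 ≤ b → b ≤ σ * a + ε →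
      b ≤ max ((1 - (1 - ψ) * (1 - σ)) * a) (ε / ((1 - σ) * ψ)) :=
  stmt_0_general σ ε ψ hσ0 hσ1 hψ0 hψ1
end

section
/- Let A, D be real matrices of appropriate dimensions, Z ≻ 0 symmetric, θ > 1, 0 < κ < 1, C₂ a matrix, and Q = [[Q11, Q12],[Q21, Q22]] symmetric. Suppose the LMI [[θ·AᵀZA, AᵀZD],[DᵀZA, θ·DᵀZD]] ⪯ [[κ·Z + C₂ᵀQ22·C₂, C₂ᵀQ21],[Q12·C₂, Q11]] holds. Then the function S(x, x̂) = (x − x̂)ᵀZ(x − x̂) satisfies, for f(x,w) = A·x + D·w + B (any fixed vector B) and all x, x̂, w, ŵ: S(f(x,w), f(x̂,ŵ)) = (A(x−x̂) + D(w−ŵ))ᵀZ(A(x−x̂) + D(w−ŵ)) ≤ κ·S(x,x̂) + [w−ŵ; C₂(x−x̂)]ᵀ Q [w−ŵ; C₂(x−x̂)]. -/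
open Matrix

theorem stmt_11 (n m r : ℕ)
    (A : Matrix (Fin n) (Fin n) ℝ) (D : Matrix (Fin n) (Fin m) ℝ)
    (Z : Matrix (Fin n) (Fin n) ℝ) (hZ : Z.PosDef)
    (C₂ : Matrix (Fin r) (Fin n) ℝ)
    (Q11 : Matrix (Fin m) (Fin m) ℝ) (Q12 : Matrix (Fin m) (Fin r) ℝ)
    (Q21 : Matrix (Fin r) (Fin m) ℝ) (Q22 : Matrix (Fin r) (Fin r) ℝ)
    (Q : Matrix (Fin m ⊕ Fin r) (Fin m ⊕ Fin r) ℝ)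
    (hQ : Q = Matrix.fromBlocks Q11 Q12 Q21 Q22) (hQsymm : Q.IsSymm)
    (θ κ : ℝ) (hθ : 1 < θ) (hκ0 : 0 < κ) (hκ1 : κ < 1)
    (hLMI : (Matrix.fromBlocks (κ • Z + C₂ᵀ * Q22 * C₂) (C₂ᵀ * Q21) (Q12 * C₂) Q11 -
      Matrix.fromBlocks (θ • (Aᵀ * Z * A)) (Aᵀ * Z * D) (Dᵀ * Z * A)
        (θ • (Dᵀ * Z * D))).PosSemidef)
    (B : Fin n → ℝ) (f : (Fin n → ℝ) → (Fin m → ℝ) → (Fin n → ℝ))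
    (hf : ∀ x w, f x w = A.mulVec x + D.mulVec w + B) :
    ∀ (x xh : Fin n → ℝ) (w wh : Fin m → ℝ),
      (A.mulVec (x - xh) + D.mulVec (w - wh)) ⬝ᵥ
          Z.mulVec (A.mulVec (x - xh) + D.mulVec (w - wh)) ≤
        κ * ((x - xh) ⬝ᵥ Z.mulVec (x - xh)) +
          Sum.elim (w - wh) (C₂.mulVec (x - xh)) ⬝ᵥ
            Q.mulVec (Sum.elim (w - wh) (C₂.mulVec (x - xh))) := by
  intro x xh w wh
  set ξ := x - xh with hξ
  set η := w - wh with hη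
  have hZsymm : Zᵀ = Z := hZ.isHermitian.eq
  have hu := hLMI.dotProduct_mulVec_nonneg (Sum.elim ξ η)
  have ha : 0 ≤ (A.mulVec ξ) ⬝ᵥ Z.mulVec (A.mulVec ξ) := by
    simpa using hZ.posSemidef.dotProduct_mulVec_nonneg (A.mulVec ξ)
  have hd : 0 ≤ (D.mulVec η) ⬝ᵥ Z.mulVec (D.mulVec η) := by
    simpa using hZ.posSemidef.dotProduct_mulVec_nonneg (D.mulVec η)
  simp only [star_trivial, sub_mulVec, dotProduct_sub, fromBlocks_mulVec,
    add_mulVec, smul_mulVec, ← mulVec_mulVec, sumElim_dotProduct_sumElim,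
    dotProduct_add, dotProduct_smul, smul_eq_mul, sub_nonneg,
    Sum.elim_comp_inl, Sum.elim_comp_inr] at hu
  -- transpose facts
  have hAT : ∀ (y : Fin n → ℝ), ξ ⬝ᵥ Aᵀ.mulVec y = A.mulVec ξ ⬝ᵥ y := by
    intro y
    rw [dotProduct_mulVec, vecMul_transpose]
  have hDT : ∀ (y : Fin n → ℝ), η ⬝ᵥ Dᵀ.mulVec y = D.mulVec η ⬝ᵥ y := by
    intro y
    rw [dotProduct_mulVec, vecMul_transpose]
  have hCT : ∀ (y : Fin r → ℝ), ξ ⬝ᵥ C₂ᵀ.mulVec y = C₂.mulVec ξ ⬝ᵥ y := by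
    intro y
    rw [dotProduct_mulVec, vecMul_transpose]
  have hZc : ∀ (u v : Fin n → ℝ), u ⬝ᵥ Z.mulVec v = v ⬝ᵥ Z.mulVec u := by
    intro u v
    rw [dotProduct_mulVec]
    conv_lhs => rw [← hZsymm]
    rw [vecMul_transpose, dotProduct_comm]
  simp only [hAT, hDT, hCT] at hu
  rw [hQ]
  simp only [add_dotProduct, dotProduct_add, mulVec_add,
    fromBlocks_mulVec, sumElim_dotProduct_sumElim, ← mulVec_mulVec,
    Sum.elim_comp_inl, Sum.elim_comp_inr]
  rw [hZc (D.mulVec η) (A.mulVec ξ)] at hu ⊢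
  nlinarith [hu, ha, hd, hθ]
end
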